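/- arXiv:2512.05337 — 4 statements merged into one kernel-verified Lean document; each statement's English description precedes it below -/
import Mathlib

section
/- The expectation of the moment estimator Ŝ_m(T) := (1/(T−m)) Σ_{t=0}^{T−m−1} x_t x_{t+m}^⊤ − (1/(T−m−2)) Σ_{t=0}^{T−m−3} x_t x_{t+m+2}^⊤ equals σ² A^m + h_m(T), where h_m(T) = (σ²/(T−m)) A^m (A^{2(T−m)} − I)(I − A²)^{-2} − (σ²/(T−m−2)) A^{m+2} (A^{2(T−m−2)} − I)(I − A²)^{-2}. -/
open MeasureTheory

private lemma integral_sum4 {Ω : Type*} [MeasurableSpace Ω] (μ : Measure Ω) {ι κ α β : Type*}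
    (s : Finset ι) (u : Finset κ) [Fintype α] [Fintype β]
    (f : ι → κ → α → β → Ω → ℝ) (hf : ∀ k k' l l', Integrable (f k k' l l') μ) :
    ∫ ω, ∑ k ∈ s, ∑ k' ∈ u, ∑ l : α, ∑ l' : β, f k k' l l' ω ∂μ
      = ∑ k ∈ s, ∑ k' ∈ u, ∑ l : α, ∑ l' : β, ∫ ω, f k k' l l' ω ∂μ := by
  rw [integral_finset_sum s (fun k _ => integrable_finset_sum u (fun k' _ =>
    integrable_finset_sum _ (fun l _ => integrable_finset_sum _ (fun l' _ => hf k k' l l'))))]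
  refine Finset.sum_congr rfl fun k _ => ?_
  rw [integral_finset_sum u (fun k' _ => integrable_finset_sum _ (fun l _ =>
    integrable_finset_sum _ (fun l' _ => hf k k' l l')))]
  refine Finset.sum_congr rfl fun k' _ => ?_
  rw [integral_finset_sum _ (fun l _ => integrable_finset_sum _ (fun l' _ => hf k k' l l'))]
  refine Finset.sum_congr rfl fun l _ => ?_
  exact integral_finset_sum _ (fun l' _ => hf k k' l l')

/-- The expectation of the moment estimator
`Ŝ_m(T) := (1/(T−m)) ∑_{t=0}^{T−m−1} x_t x_{t+m}^⊤ − (1/(T−m−2)) ∑_{t=0}^{T−m−3} x_t x_{t+m+2}^⊤`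
equals `σ² A^m + h_m(T)`, where
`h_m(T) = (σ²/(T−m)) A^m (A^{2(T−m)} − I)(I − A²)⁻² − (σ²/(T−m−2)) A^{m+2} (A^{2(T−m−2)} − I)(I − A²)⁻²`. -/
theorem stmt4 {N : ℕ} {Ω : Type*} [MeasureSpace Ω] (μ : Measure Ω) [IsProbabilityMeasure μ]
    (A : Matrix (Fin N) (Fin N) ℝ) (hA : A.IsSymm)
    (hρ : ∀ r ∈ spectrum ℝ A, |r| < 1) (σ : ℝ)
    (ξ : ℕ → Ω → (Fin N → ℝ))
    (hInt : ∀ u v : ℕ, ∀ i j : Fin N, Integrable (fun ω => ξ u ω i * ξ v ω j) μ)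
    (hcov : ∀ u v : ℕ, ∀ i j : Fin N,
      (∫ ω, ξ u ω i * ξ v ω j ∂μ) = if u = v ∧ i = j then σ ^ 2 else 0)
    (x : ℕ → Ω → (Fin N → ℝ))
    (h0 : ∀ ω, x 0 ω = 0)
    (hrec : ∀ t ω, x (t + 1) ω = A.mulVec (x t ω) + ξ t ω)
    (m T : ℕ) (hT : m + 2 < T)
    (S : Ω → Matrix (Fin N) (Fin N) ℝ)
    (hS : ∀ ω i j, S ω i j =
      (1 / (T - m : ℝ)) * ∑ t ∈ Finset.range (T - m), x t ω i * x (t + m) ω j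
      - (1 / (T - m - 2 : ℝ)) * ∑ t ∈ Finset.range (T - m - 2), x t ω i * x (t + m + 2) ω j)
    (h : Matrix (Fin N) (Fin N) ℝ)
    (hh : h = (σ ^ 2 / (T - m : ℝ)) •
        (A ^ m * (A ^ (2 * (T - m)) - 1) * ((1 - A ^ 2)⁻¹ * (1 - A ^ 2)⁻¹))
      - (σ ^ 2 / (T - m - 2 : ℝ)) •
        (A ^ (m + 2) * (A ^ (2 * (T - m - 2)) - 1) * ((1 - A ^ 2)⁻¹ * (1 - A ^ 2)⁻¹))) :
    ∀ i j : Fin N,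
      (∫ ω, S ω i j ∂μ) = ((σ ^ 2 • A ^ m + h : Matrix (Fin N) (Fin N) ℝ)) i j := by
  classical
  intro i j
  -- invertibility of 1 - A²
  have hdet : IsUnit (1 - A ^ 2).det := by
    rw [isUnit_iff_ne_zero]
    intro hd
    obtain ⟨v, hv0, hv⟩ := Matrix.exists_mulVec_eq_zero_iff.mpr hd
    rw [Matrix.sub_mulVec, Matrix.one_mulVec, sub_eq_zero, pow_two,
      ← Matrix.mulVec_mulVec] at hv
    have hspec : ∀ r : ℝ, ∀ w : Fin N → ℝ, w ≠ 0 → A.mulVec w = r • w → r ∈ spectrum ℝ A := by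
      intro r w hw0 hw
      rw [spectrum.mem_iff]
      intro hu
      have hd2 : (algebraMap ℝ (Matrix (Fin N) (Fin N) ℝ) r - A).det = 0 := by
        apply Matrix.exists_mulVec_eq_zero_iff.mp
        refine ⟨w, hw0, ?_⟩
        rw [Matrix.sub_mulVec, Algebra.algebraMap_eq_smul_one, Matrix.smul_mulVec,
          Matrix.one_mulVec, hw, sub_self]
      rw [Matrix.isUnit_iff_isUnit_det, hd2] at hu
      simp at hu
    by_cases hw : A.mulVec v + v = 0
    · have hneg : A.mulVec v = (-1 : ℝ) • v := by
        rw [neg_one_smul]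
        exact eq_neg_of_add_eq_zero_left hw
      have := hρ (-1) (hspec (-1) v hv0 hneg)
      norm_num at this
    · have hAw : A.mulVec (A.mulVec v + v) = (1 : ℝ) • (A.mulVec v + v) := by
        rw [Matrix.mulVec_add, ← hv, one_smul, add_comm]
      have := hρ 1 (hspec 1 (A.mulVec v + v) hw hAw)
      norm_num at this
  have hBl : (1 - A ^ 2)⁻¹ * (1 - A ^ 2) = 1 := Matrix.nonsing_inv_mul _ hdet
  have hBr : (1 - A ^ 2) * (1 - A ^ 2)⁻¹ = 1 := Matrix.mul_nonsing_inv _ hdet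
  -- explicit solution formula
  have hx : ∀ t ω, x t ω = ∑ k ∈ Finset.range t, (A ^ k).mulVec (ξ (t - 1 - k) ω) := by
    intro t
    induction t with
    | zero => intro ω; rw [h0]; simp
    | succ t ih =>
      intro ω
      rw [hrec, ih ω, Finset.sum_range_succ']
      congr 1
      · have hs := map_sum A.mulVecLin
            (fun k => (A ^ k).mulVec (ξ (t - 1 - k) ω)) (Finset.range t)
        simp only [Matrix.mulVecLin_apply] at hs
        rw [hs]
        refine Finset.sum_congr rfl fun k hk => ?_
        rw [Matrix.mulVec_mulVec, ← pow_succ']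
        have he : t + 1 - 1 - (k + 1) = t - 1 - k := by omega
        rw [he]
      · simp
  have hxe : ∀ t ω (a : Fin N),
      x t ω a = ∑ k ∈ Finset.range t, ∑ l, (A ^ k) a l * ξ (t - 1 - k) ω l := by
    intro t ω a
    rw [hx, Finset.sum_apply]
    refine Finset.sum_congr rfl fun k _ => ?_
    simp [Matrix.mulVec, dotProduct]
  have hprod : ∀ t s ω, x t ω i * x s ω j
      = ∑ k ∈ Finset.range t, ∑ k' ∈ Finset.range s, ∑ l : Fin N, ∑ l' : Fin N,
          ((A ^ k) i l * (A ^ k') j l') * (ξ (t - 1 - k) ω l * ξ (s - 1 - k') ω l') := by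
    intro t s ω
    rw [hxe t ω i, hxe s ω j, Finset.sum_mul_sum]
    refine Finset.sum_congr rfl fun k _ => Finset.sum_congr rfl fun k' _ => ?_
    rw [Finset.sum_mul_sum]
    refine Finset.sum_congr rfl fun l _ => Finset.sum_congr rfl fun l' _ => ?_
    ring
  have hIntx : ∀ t s, Integrable (fun ω => x t ω i * x s ω j) μ := by
    intro t s
    rw [show (fun ω => x t ω i * x s ω j)
        = fun ω => ∑ k ∈ Finset.range t, ∑ k' ∈ Finset.range s, ∑ l : Fin N, ∑ l' : Fin N,
          ((A ^ k) i l * (A ^ k') j l') * (ξ (t - 1 - k) ω l * ξ (s - 1 - k') ω l')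
        from funext (hprod t s)]
    refine integrable_finset_sum _ fun k _ => integrable_finset_sum _ fun k' _ =>
      integrable_finset_sum _ fun l _ => integrable_finset_sum _ fun l' _ => ?_
    exact (hInt _ _ _ _).const_mul _
  -- expectation formula
  have hExp : ∀ t s : ℕ, t ≤ s → (∫ ω, x t ω i * x s ω j ∂μ)
      = σ ^ 2 * ∑ k ∈ Finset.range t, (A ^ (2 * k + (s - t))) i j := by
    intro t s hts
    rw [show (fun ω => x t ω i * x s ω j)
        = fun ω => ∑ k ∈ Finset.range t, ∑ k' ∈ Finset.range s, ∑ l : Fin N, ∑ l' : Fin N,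
          ((A ^ k) i l * (A ^ k') j l') * (ξ (t - 1 - k) ω l * ξ (s - 1 - k') ω l')
        from funext (hprod t s)]
    rw [integral_sum4 μ _ _ _ (fun k k' l l' => (hInt _ _ _ _).const_mul _)]
    have hterm : ∀ k k' : ℕ,
        (∑ l : Fin N, ∑ l' : Fin N, ∫ ω,
          ((A ^ k) i l * (A ^ k') j l') * (ξ (t - 1 - k) ω l * ξ (s - 1 - k') ω l') ∂μ)
        = if t - 1 - k = s - 1 - k' then σ ^ 2 * (A ^ (k + k')) i j else 0 := by
      intro k k'
      have hin : ∀ l l' : Fin N,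
          (∫ ω, ((A ^ k) i l * (A ^ k') j l') * (ξ (t - 1 - k) ω l * ξ (s - 1 - k') ω l') ∂μ)
          = ((A ^ k) i l * (A ^ k') j l')
            * (if t - 1 - k = s - 1 - k' ∧ l = l' then σ ^ 2 else 0) := by
        intro l l'
        rw [integral_const_mul, hcov]
      simp only [hin]
      by_cases hP : t - 1 - k = s - 1 - k'
      · simp only [hP, true_and]
        have : ∀ l : Fin N, (∑ l' : Fin N,
            ((A ^ k) i l * (A ^ k') j l') * (if l = l' then σ ^ 2 else 0))
            = ((A ^ k) i l * (A ^ k') j l) * σ ^ 2 := by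
          intro l
          simp [mul_ite]
        simp only [this]
        rw [if_pos trivial, pow_add, Matrix.mul_apply, Finset.mul_sum]
        refine Finset.sum_congr rfl fun l _ => ?_
        rw [(hA.pow k').apply j l]
        ring
      · simp [hP]
    simp only [hterm]
    have hcol : ∀ k ∈ Finset.range t,
        (∑ k' ∈ Finset.range s, if t - 1 - k = s - 1 - k'
            then σ ^ 2 * (A ^ (k + k')) i j else 0)
        = σ ^ 2 * (A ^ (2 * k + (s - t))) i j := by
      intro k hk
      rw [Finset.mem_range] at hk
      rw [Finset.sum_eq_single (k + (s - t))]
      · rw [if_pos (by omega)]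
        have : k + (k + (s - t)) = 2 * k + (s - t) := by omega
        rw [this]
      · intro b hb hbne
        rw [Finset.mem_range] at hb
        rw [if_neg (by omega)]
      · intro hnot
        exact absurd (Finset.mem_range.mpr (by omega)) hnot
    rw [Finset.sum_congr rfl hcol, ← Finset.mul_sum]
  -- geometric sums
  have hgeom : ∀ n : ℕ, (∑ k ∈ Finset.range n, (A ^ 2) ^ k)
      = (1 - (A ^ 2) ^ n) * (1 - A ^ 2)⁻¹ := by
    intro n
    have hg : (∑ k ∈ Finset.range n, (A ^ 2) ^ k) * (1 - A ^ 2) = 1 - (A ^ 2) ^ n := by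
      rw [show (1 : Matrix (Fin N) (Fin N) ℝ) - A ^ 2 = -(A ^ 2 - 1) from (neg_sub _ _).symm,
        mul_neg, geom_sum_mul, neg_sub]
    calc (∑ k ∈ Finset.range n, (A ^ 2) ^ k)
        = (∑ k ∈ Finset.range n, (A ^ 2) ^ k) * ((1 - A ^ 2) * (1 - A ^ 2)⁻¹) := by
          rw [hBr, mul_one]
      _ = ((∑ k ∈ Finset.range n, (A ^ 2) ^ k) * (1 - A ^ 2)) * (1 - A ^ 2)⁻¹ := by
          rw [mul_assoc]
      _ = (1 - (A ^ 2) ^ n) * (1 - A ^ 2)⁻¹ := by rw [hg]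
  have hdouble : ∀ n : ℕ, (∑ t ∈ Finset.range n, ∑ k ∈ Finset.range t, (A ^ 2) ^ k)
      = (n : ℝ) • (1 - A ^ 2)⁻¹
        - (1 - (A ^ 2) ^ n) * ((1 - A ^ 2)⁻¹ * (1 - A ^ 2)⁻¹) := by
    intro n
    rw [Finset.sum_congr rfl fun t _ => hgeom t, ← Finset.sum_mul]
    have hsum : (∑ t ∈ Finset.range n, (1 - (A ^ 2) ^ t))
        = (n : ℝ) • (1 : Matrix (Fin N) (Fin N) ℝ) - (1 - (A ^ 2) ^ n) * (1 - A ^ 2)⁻¹ := by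
      rw [Finset.sum_sub_distrib, Finset.sum_const, hgeom n, Nat.cast_smul_eq_nsmul ℝ,
        Finset.card_range]
    rw [hsum, sub_mul, smul_mul_assoc, one_mul, mul_assoc]
  -- entry-level double sum
  have hentry : ∀ n d : ℕ,
      (∑ t ∈ Finset.range n, ∑ k ∈ Finset.range t, (A ^ (2 * k + d)) i j)
      = (A ^ d * ∑ t ∈ Finset.range n, ∑ k ∈ Finset.range t, (A ^ 2) ^ k) i j := by
    intro n d
    rw [Matrix.mul_sum, Matrix.sum_apply]
    refine Finset.sum_congr rfl fun t _ => ?_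
    rw [Matrix.mul_sum, Matrix.sum_apply]
    refine Finset.sum_congr rfl fun k _ => ?_
    rw [← pow_mul, ← pow_add]
    have : 2 * k + d = d + 2 * k := by omega
    rw [this]
  -- cast facts
  have hm : m ≤ T := by omega
  have hcast1 : (T : ℝ) - (m : ℝ) = ((T - m : ℕ) : ℝ) := by
    rw [Nat.cast_sub hm]
  have hcast2 : (T : ℝ) - (m : ℝ) - 2 = ((T - m - 2 : ℕ) : ℝ) := by
    rw [Nat.cast_sub (by omega : 2 ≤ T - m), Nat.cast_sub hm]
    norm_num
  have hne1 : ((T - m : ℕ) : ℝ) ≠ 0 := by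
    have : 0 < T - m := by omega
    positivity
  have hne2 : ((T - m - 2 : ℕ) : ℝ) ≠ 0 := by
    have : 0 < T - m - 2 := by omega
    positivity
  -- compute the integral of S
  have hf1 : Integrable (fun ω => ∑ t ∈ Finset.range (T - m), x t ω i * x (t + m) ω j) μ :=
    integrable_finset_sum _ fun t _ => hIntx t (t + m)
  have hf2 : Integrable (fun ω => ∑ t ∈ Finset.range (T - m - 2),
      x t ω i * x (t + m + 2) ω j) μ :=
    integrable_finset_sum _ fun t _ => hIntx t (t + m + 2)
  have hSint : (∫ ω, S ω i j ∂μ)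
      = (1 / (T - m : ℝ)) * (σ ^ 2 * (A ^ m
          * ∑ t ∈ Finset.range (T - m), ∑ k ∈ Finset.range t, (A ^ 2) ^ k) i j)
      - (1 / (T - m - 2 : ℝ)) * (σ ^ 2 * (A ^ (m + 2)
          * ∑ t ∈ Finset.range (T - m - 2), ∑ k ∈ Finset.range t, (A ^ 2) ^ k) i j) := by
    simp only [hS]
    rw [integral_sub (hf1.const_mul _) (hf2.const_mul _), integral_const_mul,
      integral_const_mul,
      integral_finset_sum _ (fun t _ => hIntx t (t + m)),
      integral_finset_sum _ (fun t _ => hIntx t (t + m + 2))]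
    have e1 : ∀ t : ℕ, (∫ ω, x t ω i * x (t + m) ω j ∂μ)
        = σ ^ 2 * ∑ k ∈ Finset.range t, (A ^ (2 * k + m)) i j := by
      intro t
      rw [hExp t (t + m) (by omega)]
      have : t + m - t = m := by omega
      rw [this]
    have e2 : ∀ t : ℕ, (∫ ω, x t ω i * x (t + m + 2) ω j ∂μ)
        = σ ^ 2 * ∑ k ∈ Finset.range t, (A ^ (2 * k + (m + 2))) i j := by
      intro t
      rw [hExp t (t + m + 2) (by omega)]
      have : t + m + 2 - t = m + 2 := by omega
      rw [this]
    simp only [e1, e2]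
    rw [← Finset.mul_sum, ← Finset.mul_sum, hentry (T - m) m, hentry (T - m - 2) (m + 2)]
  rw [hSint, hdouble, hdouble]
  -- matrix algebra
  have hexp1 : (A ^ 2) ^ (T - m) = A ^ (2 * (T - m)) := (pow_mul A 2 (T - m)).symm
  have hexp2 : (A ^ 2) ^ (T - m - 2) = A ^ (2 * (T - m - 2)) := (pow_mul A 2 (T - m - 2)).symm
  have hMfact : ∀ (q : ℕ) (d : ℕ),
      A ^ d * ((q : ℝ) • (1 - A ^ 2)⁻¹
          - (1 - (A ^ 2) ^ q) * ((1 - A ^ 2)⁻¹ * (1 - A ^ 2)⁻¹))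
      = (q : ℝ) • (A ^ d * (1 - A ^ 2)⁻¹)
        + A ^ d * ((A ^ 2) ^ q - 1) * ((1 - A ^ 2)⁻¹ * (1 - A ^ 2)⁻¹) := by
    intro q d
    rw [Matrix.mul_sub, mul_smul_comm, ← mul_assoc,
      show (1 : Matrix (Fin N) (Fin N) ℝ) - (A ^ 2) ^ q = -((A ^ 2) ^ q - 1) from (neg_sub _ _).symm,
      mul_neg, neg_mul, sub_neg_eq_add]
  rw [hMfact, hMfact, hexp1, hexp2]
  -- key cancellation
  have hkey : A ^ m * (1 - A ^ 2)⁻¹ - A ^ (m + 2) * (1 - A ^ 2)⁻¹ = A ^ m := by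
    rw [pow_add, mul_assoc, ← mul_sub]
    rw [show (1 - A ^ 2)⁻¹ - A ^ 2 * (1 - A ^ 2)⁻¹ = (1 - A ^ 2) * (1 - A ^ 2)⁻¹ from by
      rw [sub_mul, one_mul]]
    rw [hBr, mul_one]
  rw [hh]
  have hab : (A ^ m * (1 - A ^ 2)⁻¹ : Matrix (Fin N) (Fin N) ℝ) i j
      - (A ^ (m + 2) * (1 - A ^ 2)⁻¹ : Matrix (Fin N) (Fin N) ℝ) i j
      = (A ^ m) i j := by
    rw [← Matrix.sub_apply, hkey]
  simp only [Matrix.add_apply, Matrix.sub_apply, Matrix.smul_apply, smul_eq_mul]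
  rw [← hab, hcast2, hcast1]
  have hs1 : ((T - m : ℕ) : ℝ)⁻¹ * ((T - m : ℕ) : ℝ) = 1 := inv_mul_cancel₀ hne1
  have hs2 : ((T - m - 2 : ℕ) : ℝ)⁻¹ * ((T - m - 2 : ℕ) : ℝ) = 1 := inv_mul_cancel₀ hne2
  linear_combination (σ ^ 2 * (A ^ m * (1 - A ^ 2)⁻¹ : Matrix (Fin N) (Fin N) ℝ) i j) * hs1
    - (σ ^ 2 * (A ^ (m + 2) * (1 - A ^ 2)⁻¹ : Matrix (Fin N) (Fin N) ℝ) i j) * hs2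
end

section
/- For a symmetric matrix A with ρ(A) < 1 and T ≥ 2(m+2), the bias term h_m(T) of the estimator Ŝ_m(T) satisfies ‖h_m(T)‖_max ≤ 8σ² / (T (1 − ρ(A)²)²), and in particular h_m(T) = O(1/T) as T → ∞. -/
/-!
Diagonalise `A = U D Uᵀ` with `U` orthogonal and `D = diag(μ)`. Conjugation by `U` composed with
`diagonal` is an algebra homomorphism that also commutes with the inverse of `1 - A²`, so
`h_m(T) = U diag(h_m(T)(μₖ)) Uᵀ` and the matrix problem becomes a scalar one. Since
`|μₖ| ≤ r < 1`, each scalar term is at most `2/(1 - r²)²` times its coefficient, and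
`T ≥ 2(m + 2)` bounds both coefficients by `2σ²/T`. Finally, the rows of `U` are unit vectors,
so `|(U diag(w) Uᵀ)ᵢⱼ| ≤ Σₖ |wₖ| |Uᵢₖ| |Uⱼₖ| ≤ maxₖ |wₖ|` by AM-GM.
-/

open Matrix Unitary

/-- `h_m(T)` evaluated in any real algebra with an inverse operation: we evaluate it at the
matrix `A`, at the vector of its eigenvalues and at a single eigenvalue. -/
noncomputable def biasTerm {R : Type*} [Ring R] [Inv R] [Module ℝ R] (σ : ℝ) (m T : ℕ) (x : R) :
    R :=
  (σ ^ 2 / (T - m : ℝ)) • (x ^ m * (x ^ (2 * (T - m)) - 1) * ((1 - x ^ 2)⁻¹ * (1 - x ^ 2)⁻¹))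
    - (σ ^ 2 / (T - m - 2 : ℝ)) •
      (x ^ (m + 2) * (x ^ (2 * (T - m - 2)) - 1) * ((1 - x ^ 2)⁻¹ * (1 - x ^ 2)⁻¹))

theorem biasTerm_apply {ι : Type*} (σ : ℝ) (m T : ℕ) (v : ι → ℝ) (k : ι) :
    biasTerm σ m T v k = biasTerm σ m T (v k) := by
  simp [biasTerm]

theorem AlgHom.map_biasTerm {R S : Type*} [Ring R] [Inv R] [Algebra ℝ R] [Ring S] [Inv S]
    [Algebra ℝ S] (φ : R →ₐ[ℝ] S) (σ : ℝ) (m T : ℕ) (x : R)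
    (hinv : (φ (1 - x ^ 2))⁻¹ = φ (1 - x ^ 2)⁻¹) :
    φ (biasTerm σ m T x) = biasTerm σ m T (φ x) := by
  simp only [biasTerm, map_sub, map_smul, map_mul, map_pow, map_one] at hinv ⊢
  rw [hinv]

theorem Matrix.abs_conjStarAlgAut_diagonal_apply_le {n : Type*} [Fintype n] [DecidableEq n]
    (U : unitary (Matrix n n ℝ)) {w : n → ℝ} {C : ℝ} (hw : ∀ k, |w k| ≤ C) (i j : n) :
    |conjStarAlgAut ℝ _ U (diagonal w) i j| ≤ C := by
  have hrow (a : n) : ∑ k, (U : Matrix n n ℝ) a k ^ 2 = 1 := by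
    simpa [mul_apply, one_apply, sq] using congr($(mul_star_self_of_mem U.2) a a)
  have hC : 0 ≤ C := (abs_nonneg _).trans (hw i)
  calc |conjStarAlgAut ℝ _ U (diagonal w) i j|
      = |∑ k, (U : Matrix n n ℝ) i k * w k * (U : Matrix n n ℝ) j k| := by
        simp only [conjStarAlgAut_apply, mul_apply (M := _ * diagonal w), mul_diagonal,
          star_apply, star_trivial]
    _ ≤ ∑ k, C * ((U i k ^ 2 + U j k ^ 2) / 2) := by
        refine (Finset.abs_sum_le_sum_abs _ _).trans (Finset.sum_le_sum fun k _ ↦ ?_)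
        rw [abs_mul, abs_mul, mul_right_comm, mul_comm]
        gcongr
        · exact hw k
        · nlinarith [sq_abs (U i k : ℝ), sq_abs (U j k : ℝ), sq_nonneg (|U i k| - |U j k|)]
    _ = C := by
        rw [← Finset.mul_sum, ← Finset.sum_div, Finset.sum_add_distrib, hrow, hrow]; ring

theorem abs_pow_mul_pow_sub_one_mul_inv_sq_le {x r : ℝ} (hx : |x| ≤ r) (hr : r < 1) (k e : ℕ) :
    |x ^ k * (x ^ e - 1) * ((1 - x ^ 2)⁻¹ * (1 - x ^ 2)⁻¹)| ≤ 2 / (1 - r ^ 2) ^ 2 := by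
  have hx1 : |x| ≤ 1 := hx.trans hr.le
  have hr2 : 0 < 1 - r ^ 2 := by nlinarith [abs_nonneg x]
  have hxr : 1 - r ^ 2 ≤ 1 - x ^ 2 := by nlinarith [sq_abs x, abs_nonneg x]
  have hx2 : 0 < (1 - x ^ 2) ^ 2 := pow_pos (hr2.trans_le hxr) 2
  have hpow (j : ℕ) : |x ^ j| ≤ 1 := by
    rw [abs_pow]; exact pow_le_one₀ (abs_nonneg x) hx1
  calc |x ^ k * (x ^ e - 1) * ((1 - x ^ 2)⁻¹ * (1 - x ^ 2)⁻¹)|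
      = |x ^ k| * |x ^ e - 1| / (1 - x ^ 2) ^ 2 := by
        rw [← mul_inv, ← sq, ← div_eq_mul_inv, abs_div, abs_mul, abs_of_pos hx2]
    _ ≤ 1 * 2 / (1 - r ^ 2) ^ 2 := by
        gcongr
        · exact hpow k
        · exact (abs_sub _ _).trans (by rw [abs_one]; linarith [hpow e])
    _ = 2 / (1 - r ^ 2) ^ 2 := by rw [one_mul]

theorem div_sub_le_two_mul_div {a s T : ℝ} (ha : 0 ≤ a) (hT : 0 < T) (hs : 2 * s ≤ T) :
    a / (T - s) ≤ 2 * a / T := by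
  rw [div_le_div_iff₀ (by linarith) hT]
  nlinarith

theorem abs_biasTerm_le {x r : ℝ} (hx : |x| ≤ r) (hr : r < 1) (σ : ℝ) {m T : ℕ}
    (hT : 2 * (m + 2) ≤ T) : |biasTerm σ m T x| ≤ 8 * σ ^ 2 / (T * (1 - r ^ 2) ^ 2) := by
  have hT' : (2 * (m + 2) : ℝ) ≤ T := by exact_mod_cast hT
  have hTpos : (0 : ℝ) < T := by linarith
  have hc₁ : σ ^ 2 / (T - m) ≤ 2 * σ ^ 2 / T :=
    div_sub_le_two_mul_div (sq_nonneg σ) hTpos (by linarith)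
  have hc₂ : σ ^ 2 / (T - m - 2) ≤ 2 * σ ^ 2 / T := by
    rw [sub_sub]; exact div_sub_le_two_mul_div (sq_nonneg σ) hTpos (by linarith)
  have hq := abs_pow_mul_pow_sub_one_mul_inv_sq_le hx hr
  calc |biasTerm σ m T x|
      ≤ σ ^ 2 / (T - m) * |x ^ m * (x ^ (2 * (T - m)) - 1) * ((1 - x ^ 2)⁻¹ * (1 - x ^ 2)⁻¹)|
        + σ ^ 2 / (T - m - 2) *
          |x ^ (m + 2) * (x ^ (2 * (T - m - 2)) - 1) * ((1 - x ^ 2)⁻¹ * (1 - x ^ 2)⁻¹)| := by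
        refine (abs_sub _ _).trans_eq ?_
        rw [smul_eq_mul, smul_eq_mul, abs_mul (σ ^ 2 / _), abs_mul (σ ^ 2 / _),
          abs_of_nonneg (div_nonneg (sq_nonneg σ) (by linarith)),
          abs_of_nonneg (div_nonneg (sq_nonneg σ) (by linarith))]
    _ ≤ 2 * σ ^ 2 / T * (2 / (1 - r ^ 2) ^ 2) + 2 * σ ^ 2 / T * (2 / (1 - r ^ 2) ^ 2) := by
        gcongr
        · exact hq _ _
        · exact hq _ _
    _ = 8 * σ ^ 2 / (T * (1 - r ^ 2) ^ 2) := by field_simp; ring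

theorem stmt5_general {N : ℕ} (A : Matrix (Fin N) (Fin N) ℝ) (hA : A.IsSymm)
    (r : ℝ) (hr : ∀ μ ∈ spectrum ℝ A, |μ| ≤ r) (hr1 : r < 1)
    (σ : ℝ) (m T : ℕ) (hT : 2 * (m + 2) ≤ T)
    (h : Matrix (Fin N) (Fin N) ℝ)
    (hh : h = (σ ^ 2 / (T - m : ℝ)) •
        (A ^ m * (A ^ (2 * (T - m)) - 1) * ((1 - A ^ 2)⁻¹ * (1 - A ^ 2)⁻¹))
      - (σ ^ 2 / (T - m - 2 : ℝ)) •
        (A ^ (m + 2) * (A ^ (2 * (T - m - 2)) - 1) * ((1 - A ^ 2)⁻¹ * (1 - A ^ 2)⁻¹))) :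
    ∀ i j : Fin N, |h i j| ≤ 8 * σ ^ 2 / (T * (1 - r ^ 2) ^ 2) := by
  have hA' : A.IsHermitian := isHermitian_iff_isSymm.2 hA
  set U := hA'.eigenvectorUnitary
  set μ := hA'.eigenvalues
  have hμ (k : Fin N) : |μ k| ≤ r := hr _ (hA'.eigenvalues_mem_spectrum_real k)
  let φ : (Fin N → ℝ) →ₐ[ℝ] Matrix (Fin N) (Fin N) ℝ :=
    (conjStarAlgAut ℝ _ U).toAlgEquiv.toAlgHom.comp (diagonalAlgHom ℝ)
  have hAμ : A = φ μ := by simpa [φ] using hA'.spectral_theorem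
  have hcancel : (1 - μ ^ 2)⁻¹ * (1 - μ ^ 2) = 1 := funext fun k ↦ inv_mul_cancel₀ <| by
    simpa [sub_eq_zero] using ((sq_lt_one_iff_abs_lt_one _).2 ((hμ k).trans_lt hr1)).ne'
  have hinv : (φ (1 - μ ^ 2))⁻¹ = φ (1 - μ ^ 2)⁻¹ :=
    inv_eq_left_inv (by rw [← map_mul, hcancel, map_one])
  have hhμ : h = φ (biasTerm σ m T μ) := by
    rw [φ.map_biasTerm σ m T μ hinv, ← hAμ]
    exact hh
  intro i j
  rw [hhμ]
  exact abs_conjStarAlgAut_diagonal_apply_le U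
    (fun k ↦ (biasTerm_apply σ m T μ k).symm ▸ abs_biasTerm_le (hμ k) hr1 σ hT) i j

/-- For `A` symmetric with spectral radius `ρ(A) ≤ r < 1` and `T ≥ 2(m+2)`,
the bias term `h_m(T)` satisfies `‖h_m(T)‖_max ≤ 8σ²/(T(1 − ρ(A)²)²)`
(in particular `h_m(T) = O(1/T)`). -/
theorem stmt5 {N : ℕ} (A : Matrix (Fin N) (Fin N) ℝ) (hA : A.IsSymm)
    (r : ℝ) (hr : ∀ μ ∈ spectrum ℝ A, |μ| ≤ r) (hr1 : r < 1) (hr0 : 0 ≤ r)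
    (σ : ℝ) (m T : ℕ) (hT : 2 * (m + 2) ≤ T)
    (h : Matrix (Fin N) (Fin N) ℝ)
    (hh : h = (σ ^ 2 / (T - m : ℝ)) •
        (A ^ m * (A ^ (2 * (T - m)) - 1) * ((1 - A ^ 2)⁻¹ * (1 - A ^ 2)⁻¹))
      - (σ ^ 2 / (T - m - 2 : ℝ)) •
        (A ^ (m + 2) * (A ^ (2 * (T - m - 2)) - 1) * ((1 - A ^ 2)⁻¹ * (1 - A ^ 2)⁻¹))) :
    ∀ i j : Fin N, |h i j| ≤ 8 * σ ^ 2 / (T * (1 - r ^ 2) ^ 2) :=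
  stmt5_general A hA r hr hr1 σ m T hT h hh
end

section
/- Let M be the block tridiagonal symmetric matrix with diagonal blocks I + D² (last block I) and off-diagonal blocks −D, where D is a real diagonal matrix with entries of absolute value less than 1. Then every eigenvalue of M is at least (1 − max_i |D_{ii}|)². -/
/-- If at most one element satisfies `P`, the sum of an indicator is at most `x`. -/
lemma stmt8_sum_ite_le {n : ℕ} (x : ℝ) (hx : 0 ≤ x) (P : Fin n → Prop) [DecidablePred P]
    (h : ∀ t₁ t₂, P t₁ → P t₂ → t₁ = t₂) :
    ∑ t : Fin n, (if P t then x else 0) ≤ x := by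
  rw [← Finset.sum_filter, Finset.sum_const, nsmul_eq_mul]
  have hcard : (Finset.univ.filter P).card ≤ 1 := by
    apply Finset.card_le_one.2
    intro a ha b hb
    exact h a b (Finset.mem_filter.1 ha).2 (Finset.mem_filter.1 hb).2
  calc ((Finset.univ.filter P).card : ℝ) * x ≤ 1 * x := by
        apply mul_le_mul_of_nonneg_right _ hx
        exact_mod_cast hcard
    _ = x := one_mul x

/-- Let `M` be the block tridiagonal symmetric matrix with diagonal blocks
`I + D²` (last block `I`) and off-diagonal blocks `−D`, where `D` is a real diagonal
matrix with entries of absolute value less than `1`. Then every eigenvalue of `M` is at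
least `(1 − max_i |D_{ii}|)²` (stated via any bound `d ≥ max_i |D_{ii}|`, `d < 1`). -/
theorem stmt8 {N T : ℕ} (hT : 2 ≤ T)
    (D : Matrix (Fin N) (Fin N) ℝ) (hDdiag : ∀ i j : Fin N, i ≠ j → D i j = 0)
    (d : ℝ) (hd : ∀ i : Fin N, |D i i| ≤ d) (hd1 : d < 1) (hd0 : 0 ≤ d)
    (M : Matrix (Fin (T - 1) × Fin N) (Fin (T - 1) × Fin N) ℝ)
    (hM : ∀ s t : Fin (T - 1), ∀ i j : Fin N,
      M (s, i) (t, j) =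
        if s = t then
          (if (s : ℕ) = T - 2 then (1 : Matrix (Fin N) (Fin N) ℝ) else 1 + D ^ 2) i j
        else if (s : ℕ) + 1 = (t : ℕ) ∨ (t : ℕ) + 1 = (s : ℕ) then (-D) i j
        else 0) :
    ∀ μ ∈ spectrum ℝ M, (1 - d) ^ 2 ≤ μ := by
  intro μ hμ
  have hμ' : Module.End.HasEigenvalue (Matrix.toLin' M) μ := by
    rw [Module.End.hasEigenvalue_iff_mem_spectrum]
    rwa [show Matrix.toLin' M = Matrix.toLinAlgEquiv (Pi.basisFun ℝ _) M from rfl,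
      AlgEquiv.spectrum_eq]
  obtain ⟨⟨s, i⟩, hk⟩ := eigenvalue_mem_ball hμ'
  rw [Metric.mem_closedBall, Real.dist_eq] at hk
  set a : ℝ := D i i with ha_def
  have ha : |a| ≤ d := hd i
  -- the diagonal entry
  have hDsq : ∀ j : Fin N, (D ^ 2) i j = if j = i then a ^ 2 else 0 := by
    intro j
    rw [pow_two, Matrix.mul_apply]
    by_cases hji : j = i
    · subst hji
      rw [if_pos rfl, Finset.sum_eq_single j]
      · rw [pow_two]
      · intro b _ hb; rw [hDdiag b j hb, mul_zero]
      · simp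
    · rw [if_neg hji]
      apply Finset.sum_eq_zero
      intro b _
      by_cases hbi : b = i
      · subst hbi; rw [hDdiag b j (Ne.symm hji), mul_zero]
      · rw [hDdiag i b (Ne.symm hbi), zero_mul]
  have hdiag : M (s, i) (s, i) = if (s : ℕ) = T - 2 then 1 else 1 + a ^ 2 := by
    rw [hM, if_pos rfl]
    by_cases hs : (s : ℕ) = T - 2
    · rw [if_pos hs, if_pos hs, Matrix.one_apply_eq]
    · rw [if_neg hs, if_neg hs, Matrix.add_apply, Matrix.one_apply_eq, hDsq i, if_pos rfl]
  -- the off-diagonal row sum bound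
  set g : Fin (T - 1) × Fin N → ℝ := fun p =>
    if p.2 = i ∧ ((s : ℕ) + 1 = (p.1 : ℕ) ∨ (p.1 : ℕ) + 1 = (s : ℕ)) then |a| else 0 with hg_def
  have hg_nonneg : ∀ p, 0 ≤ g p := by
    intro p; rw [hg_def]; dsimp only; split
    · exact abs_nonneg a
    · exact le_refl 0
  have hterm : ∀ p : Fin (T - 1) × Fin N, p ≠ (s, i) → ‖M (s, i) p‖ ≤ g p := by
    rintro ⟨t, j⟩ hp
    rw [show M (s, i) (t, j) = _ from hM s t i j, hg_def]
    dsimp only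
    by_cases hst : s = t
    · subst hst
      have hji : j ≠ i := by
        intro h; exact hp (by rw [h])
      rw [if_pos rfl]
      have hc : ¬(j = i ∧ ((s : ℕ) + 1 = (s : ℕ) ∨ (s : ℕ) + 1 = (s : ℕ))) := by
        rintro ⟨h, _⟩; exact hji h
      rw [if_neg hc]
      by_cases hs2 : (s : ℕ) = T - 2
      · rw [if_pos hs2, Matrix.one_apply_ne (Ne.symm hji)]
        simp
      · rw [if_neg hs2, Matrix.add_apply, Matrix.one_apply_ne (Ne.symm hji),
          hDsq j, if_neg hji]
        simp
    · rw [if_neg hst]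
      by_cases hadj : (s : ℕ) + 1 = (t : ℕ) ∨ (t : ℕ) + 1 = (s : ℕ)
      · rw [if_pos hadj, Matrix.neg_apply]
        by_cases hji : j = i
        · subst hji
          rw [if_pos ⟨rfl, hadj⟩, norm_neg, Real.norm_eq_abs]
        · rw [hDdiag i j (Ne.symm hji), neg_zero, norm_zero]
          exact hg_nonneg (t, j)
      · rw [if_neg hadj, norm_zero]
        exact hg_nonneg (t, j)
  have hR : ∑ p ∈ Finset.univ.erase (s, i), ‖M (s, i) p‖ ≤ ∑ p : Fin (T - 1) × Fin N, g p := by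
    calc ∑ p ∈ Finset.univ.erase (s, i), ‖M (s, i) p‖
        ≤ ∑ p ∈ Finset.univ.erase (s, i), g p :=
          Finset.sum_le_sum (fun p hp => hterm p (Finset.ne_of_mem_erase hp))
      _ ≤ ∑ p : Fin (T - 1) × Fin N, g p :=
          Finset.sum_le_sum_of_subset_of_nonneg (Finset.subset_univ _)
            (fun p _ _ => hg_nonneg p)
  have hgsum : ∑ p : Fin (T - 1) × Fin N, g p
      = ∑ t : Fin (T - 1),
          (if (s : ℕ) + 1 = (t : ℕ) ∨ (t : ℕ) + 1 = (s : ℕ) then |a| else 0) := by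
    rw [Fintype.sum_prod_type]
    apply Finset.sum_congr rfl
    intro t _
    rw [hg_def]
    by_cases hc : (s : ℕ) + 1 = (t : ℕ) ∨ (t : ℕ) + 1 = (s : ℕ)
    · simp [hc]
    · simp [hc]
  have hsum1 : ∑ t : Fin (T - 1), (if (s : ℕ) + 1 = (t : ℕ) then |a| else 0) ≤ |a| :=
    stmt8_sum_ite_le |a| (abs_nonneg a) _ (fun t₁ t₂ h₁ h₂ => Fin.ext (by omega))
  have hsum2 : ∑ t : Fin (T - 1), (if (t : ℕ) + 1 = (s : ℕ) then |a| else 0) ≤ |a| :=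
    stmt8_sum_ite_le |a| (abs_nonneg a) _ (fun t₁ t₂ h₁ h₂ => Fin.ext (by omega))
  by_cases hs2 : (s : ℕ) = T - 2
  · -- last block: diagonal 1, radius ≤ |a|
    have hnolast : ∀ t : Fin (T - 1), ¬((s : ℕ) + 1 = (t : ℕ)) := by
      intro t h
      have := t.isLt
      omega
    have hS : ∑ t : Fin (T - 1),
        (if (s : ℕ) + 1 = (t : ℕ) ∨ (t : ℕ) + 1 = (s : ℕ) then |a| else 0) ≤ |a| := by
      refine le_trans (le_of_eq (Finset.sum_congr rfl ?_)) hsum2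
      intro t _
      by_cases hc : (t : ℕ) + 1 = (s : ℕ)
      · rw [if_pos (Or.inr hc), if_pos hc]
      · rw [if_neg (by rintro (h | h); exact hnolast t h; exact hc h), if_neg hc]
    rw [hdiag, if_pos hs2] at hk
    have := (abs_le.1 hk).1
    have hRa : ∑ p ∈ Finset.univ.erase (s, i), ‖M (s, i) p‖ ≤ |a| :=
      le_trans hR (hgsum ▸ hS)
    nlinarith [abs_nonneg a]
  · -- middle block: diagonal 1 + a², radius ≤ 2|a|
    have hS : ∑ t : Fin (T - 1),
        (if (s : ℕ) + 1 = (t : ℕ) ∨ (t : ℕ) + 1 = (s : ℕ) then |a| else 0) ≤ 2 * |a| := by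
      have hstep : ∀ t : Fin (T - 1),
          (if (s : ℕ) + 1 = (t : ℕ) ∨ (t : ℕ) + 1 = (s : ℕ) then |a| else 0)
          ≤ (if (s : ℕ) + 1 = (t : ℕ) then |a| else 0)
            + (if (t : ℕ) + 1 = (s : ℕ) then |a| else 0) := by
        intro t
        by_cases h1 : (s : ℕ) + 1 = (t : ℕ)
        · by_cases h2 : (t : ℕ) + 1 = (s : ℕ) <;>
            simp [h1, h2, abs_nonneg a]
        · by_cases h2 : (t : ℕ) + 1 = (s : ℕ) <;>
            simp [h1, h2, abs_nonneg a]
      calc ∑ t : Fin (T - 1),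
            (if (s : ℕ) + 1 = (t : ℕ) ∨ (t : ℕ) + 1 = (s : ℕ) then |a| else 0)
          ≤ ∑ t : Fin (T - 1), ((if (s : ℕ) + 1 = (t : ℕ) then |a| else 0)
              + (if (t : ℕ) + 1 = (s : ℕ) then |a| else 0)) :=
            Finset.sum_le_sum (fun t _ => hstep t)
        _ = (∑ t : Fin (T - 1), (if (s : ℕ) + 1 = (t : ℕ) then |a| else 0))
              + ∑ t : Fin (T - 1), (if (t : ℕ) + 1 = (s : ℕ) then |a| else 0) :=
            Finset.sum_add_distrib
        _ ≤ 2 * |a| := by linarith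
    rw [hdiag, if_neg hs2] at hk
    have := (abs_le.1 hk).1
    have hRa : ∑ p ∈ Finset.univ.erase (s, i), ‖M (s, i) p‖ ≤ 2 * |a| :=
      le_trans hR (hgsum ▸ hS)
    nlinarith [abs_nonneg a, sq_abs a, sq_nonneg (d - |a|)]
end

section
/- For A symmetric with ρ(A) < 1 and L the block lower-triangular matrix with blocks A^{s−t}, the largest eigenvalue of L L^⊤ is at most 1/(1 − ρ(A))². -/
/-!
With `Z_k` the `(T-1) × (T-1)` matrix with ones on the `k`-th subdiagonal,
`L = ∑_{k < T-1} Z_k ⊗ A^k`. In the spectral norm `‖Z_k‖ ≤ 1`, since `Z_kᴴ Z_k` is a diagonal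
0/1 matrix; `‖A‖ ≤ r`, since `A` is unitarily similar to the diagonal matrix of its
eigenvalues; and the norm is submultiplicative for Kronecker products. Hence
`‖L‖ ≤ ∑ r^k ≤ 1/(1 - r)`, and every eigenvalue of `L Lᵀ` is at most `‖L Lᵀ‖ = ‖L‖²`.
-/

open WithLp
open scoped Matrix.Norms.L2Operator Kronecker

namespace Matrix

section L2OpNorm

variable {𝕜 : Type*} [RCLike 𝕜] {m n o m' n' : Type*} [Fintype m] [Fintype n] [Fintype o]
  [Fintype m'] [Fintype n']

theorem l2_opNorm_le_of_mulVec [DecidableEq n] {A : Matrix m n 𝕜} {C : ℝ} (hC : 0 ≤ C)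
    (h : ∀ x : EuclideanSpace 𝕜 n, ‖toLp 2 (A *ᵥ ofLp x)‖ ≤ C * ‖x‖) : ‖A‖ ≤ C := by
  rw [l2_opNorm_def]
  exact ContinuousLinearMap.opNorm_le_bound _ hC fun x => by simpa [toLpLin_apply] using h x

-- `l2_opNorm_mulVec` with `toLp`/`ofLp` in place of `EuclideanSpace.equiv`, so that it unifies
-- cheaply with the goals produced by `l2_opNorm_le_of_mulVec`.
theorem norm_toLp_mulVec_le [DecidableEq n] (A : Matrix m n 𝕜) (x : EuclideanSpace 𝕜 n) :
    ‖toLp 2 (A *ᵥ ofLp x)‖ ≤ ‖A‖ * ‖x‖ :=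
  l2_opNorm_mulVec A x

theorem l2_opNorm_reindex_le [DecidableEq n] [DecidableEq n'] (e : m ≃ m') (f : n ≃ n')
    (A : Matrix m n 𝕜) : ‖reindex e f A‖ ≤ ‖A‖ := by
  refine l2_opNorm_le_of_mulVec (norm_nonneg A) fun x => ?_
  have hx : ‖toLp 2 (ofLp x ∘ f)‖ = ‖x‖ :=
    (LinearIsometryEquiv.piLpCongrLeft 2 𝕜 𝕜 f.symm).norm_map x
  have hAx : ‖toLp 2 (reindex e f A *ᵥ ofLp x)‖ = ‖toLp 2 (A *ᵥ (ofLp x ∘ f))‖ := by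
    rw [reindex_apply, submatrix_mulVec_equiv, Equiv.symm_symm]
    exact (LinearIsometryEquiv.piLpCongrLeft 2 𝕜 𝕜 e).norm_map (toLp 2 (A *ᵥ (ofLp x ∘ f)))
  rw [hAx, ← hx]
  exact norm_toLp_mulVec_le A (toLp 2 (ofLp x ∘ f))

theorem _root_.EuclideanSpace.norm_sq_eq_sum_norm_sq_slice (x : EuclideanSpace 𝕜 (n × o)) :
    ‖x‖ ^ 2 = ∑ k, ‖toLp 2 (fun i => x (i, k))‖ ^ 2 := by
  simp only [EuclideanSpace.norm_sq_eq, Fintype.sum_prod_type_right]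

theorem l2_opNorm_blockDiagonal_le [DecidableEq n] [DecidableEq o] (M : o → Matrix m n 𝕜)
    {C : ℝ} (hC : 0 ≤ C) (hM : ∀ k, ‖M k‖ ≤ C) : ‖blockDiagonal M‖ ≤ C := by
  refine l2_opNorm_le_of_mulVec hC fun x => ?_
  have hslice : ∀ k, (fun i => (blockDiagonal M *ᵥ ofLp x) (i, k)) =
      M k *ᵥ ofLp (toLp 2 fun j => x (j, k)) := by
    intro k
    ext i
    simp [mulVec, dotProduct, blockDiagonal_apply, Fintype.sum_prod_type_right]
  refine (sq_le_sq₀ (norm_nonneg _) (by positivity)).mp ?_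
  rw [EuclideanSpace.norm_sq_eq_sum_norm_sq_slice, mul_pow,
    EuclideanSpace.norm_sq_eq_sum_norm_sq_slice, Finset.mul_sum]
  refine Finset.sum_le_sum fun k _ => ?_
  rw [← mul_pow, hslice]
  exact pow_le_pow_left₀ (norm_nonneg _)
    ((norm_toLp_mulVec_le _ _).trans (mul_le_mul_of_nonneg_right (hM k) (norm_nonneg _))) 2

theorem l2_opNorm_kronecker_le {l p : Type*} [Fintype l] [Fintype p] [DecidableEq m]
    [DecidableEq n] [DecidableEq p] (A : Matrix l m 𝕜) (B : Matrix n p 𝕜) :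
    ‖A ⊗ₖ B‖ ≤ ‖A‖ * ‖B‖ := by
  have hA : ‖A ⊗ₖ (1 : Matrix n n 𝕜)‖ ≤ ‖A‖ := by
    rw [← diagonal_one, kronecker_diagonal]
    exact l2_opNorm_blockDiagonal_le _ (norm_nonneg A) fun _ => by simp
  have hB : ‖(1 : Matrix m m 𝕜) ⊗ₖ B‖ ≤ ‖B‖ := by
    rw [← diagonal_one, diagonal_kronecker]
    exact (l2_opNorm_reindex_le _ _ _).trans
      (l2_opNorm_blockDiagonal_le _ (norm_nonneg B) fun _ => by simp)
  calc ‖A ⊗ₖ B‖ = ‖(A ⊗ₖ (1 : Matrix n n 𝕜)) * ((1 : Matrix m m 𝕜) ⊗ₖ B)‖ := by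
        rw [← mul_kronecker_mul, Matrix.mul_one, Matrix.one_mul]
    _ ≤ ‖A‖ * ‖B‖ := (l2_opNorm_mul _ _).trans (mul_le_mul hA hB (norm_nonneg _) (norm_nonneg _))

variable [DecidableEq n]

theorem l2_opNorm_one_le : ‖(1 : Matrix n n 𝕜)‖ ≤ 1 := by
  rw [← diagonal_one, l2_opNorm_diagonal]
  exact (pi_norm_le_iff_of_nonneg zero_le_one).mpr fun _ => by simp

theorem l2_opNorm_pow_le (A : Matrix n n 𝕜) : ∀ k : ℕ, ‖A ^ k‖ ≤ ‖A‖ ^ k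
  | 0 => by simpa using l2_opNorm_one_le
  | k + 1 => norm_pow_le' A k.succ_pos

theorem norm_le_l2_opNorm_of_mem_spectrum {A : Matrix n n 𝕜} {μ : 𝕜} (hμ : μ ∈ spectrum 𝕜 A) :
    ‖μ‖ ≤ ‖A‖ :=
  (spectrum.norm_le_norm_mul_of_mem hμ).trans
    (mul_le_of_le_one_right (norm_nonneg A) l2_opNorm_one_le)

theorem IsHermitian.l2_opNorm_eq {A : Matrix n n 𝕜} (hA : A.IsHermitian) :
    ‖A‖ = ‖hA.eigenvalues‖ := by
  conv_lhs => rw [hA.spectral_theorem]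
  rw [Unitary.conjStarAlgAut_apply,
    CStarRing.norm_mul_mem_unitary _ (Unitary.star_mem (SetLike.coe_mem _)),
    CStarRing.norm_mem_unitary_mul _ (SetLike.coe_mem _), l2_opNorm_diagonal]
  simp [Pi.norm_def]

end L2OpNorm

def shift {α : Type*} [Zero α] [One α] (T k : ℕ) : Matrix (Fin T) (Fin T) α :=
  of fun s t => if (t : ℕ) + k = s then 1 else 0

section Shift

variable {𝕜 : Type*} [RCLike 𝕜]

theorem conjTranspose_shift_mul_shift (T k : ℕ) :
    (shift T k)ᴴ * shift T k =
      diagonal fun t : Fin T => if (t : ℕ) + k < T then (1 : 𝕜) else 0 := by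
  ext t t'
  simp only [shift, mul_apply, conjTranspose_apply, of_apply, diagonal_apply, apply_ite star,
    star_one, star_zero, ite_mul, one_mul, zero_mul]
  rw [Fin.sum_univ_eq_sum_range (fun s => if (t : ℕ) + k = s then
    (if (t' : ℕ) + k = s then (1 : 𝕜) else 0) else 0), Finset.sum_ite_eq]
  simp only [Finset.mem_range, add_left_inj, Fin.ext_iff, eq_comm]
  split_ifs <;> rfl

theorem l2_opNorm_shift_le (T k : ℕ) : ‖(shift T k : Matrix (Fin T) (Fin T) 𝕜)‖ ≤ 1 := by
  refine (pow_le_one_iff_of_nonneg (norm_nonneg _) two_ne_zero).mp ?_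
  rw [sq, ← l2_opNorm_conjTranspose_mul_self, conjTranspose_shift_mul_shift, l2_opNorm_diagonal]
  refine (pi_norm_le_iff_of_nonneg zero_le_one).mpr fun t => ?_
  split_ifs <;> simp

end Shift

theorem eq_sum_shift_kronecker_pow {α n : Type*} [CommSemiring α] [Fintype n] [DecidableEq n]
    {T : ℕ} (A : Matrix n n α) (L : Matrix (Fin T × n) (Fin T × n) α)
    (hL : ∀ (s t : Fin T) (i j : n),
      L (s, i) (t, j) = if (t : ℕ) ≤ s then (A ^ ((s : ℕ) - t)) i j else 0) :
    L = ∑ k ∈ Finset.range T, shift T k ⊗ₖ (A ^ k) := by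
  ext ⟨s, i⟩ ⟨t, j⟩
  rw [hL, sum_apply]
  simp only [kronecker_apply, shift, of_apply, ite_mul, one_mul, zero_mul]
  split_ifs with hts
  · rw [Finset.sum_eq_single_of_mem ((s : ℕ) - t) (Finset.mem_range.mpr (by omega))
      fun k _ hk => if_neg (by omega), if_pos (by omega)]
  · exact (Finset.sum_eq_zero fun k _ => if_neg (by omega)).symm

theorem l2_opNorm_sum_shift_kronecker_pow_le {𝕜 n : Type*} [RCLike 𝕜] [Fintype n]
    [DecidableEq n] (T : ℕ) {A : Matrix n n 𝕜} {r : ℝ} (hA : ‖A‖ ≤ r) (hr : r < 1) :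
    ‖∑ k ∈ Finset.range T, shift T k ⊗ₖ (A ^ k)‖ ≤ 1 / (1 - r) := by
  have hr0 : 0 ≤ r := (norm_nonneg A).trans hA
  calc ‖∑ k ∈ Finset.range T, shift T k ⊗ₖ (A ^ k)‖
      ≤ ∑ k ∈ Finset.range T, ‖(shift T k : Matrix (Fin T) (Fin T) 𝕜)‖ * ‖A ^ k‖ :=
        (norm_sum_le _ _).trans (Finset.sum_le_sum fun k _ => l2_opNorm_kronecker_le _ _)
    _ ≤ ∑ k ∈ Finset.range T, 1 * r ^ k :=
        Finset.sum_le_sum fun k _ => mul_le_mul (l2_opNorm_shift_le T k)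
          ((l2_opNorm_pow_le A k).trans (pow_le_pow_left₀ (norm_nonneg A) hA k))
          (norm_nonneg _) zero_le_one
    _ ≤ 1 / (1 - r) := by
        simpa only [one_mul, pow_zero, Finset.range_eq_Ico] using
          geom_sum_Ico_le_of_lt_one (m := 0) (n := T) hr0 hr

end Matrix

/-- For `A` symmetric with spectral radius `ρ(A) ≤ r < 1` and `L` the block
lower-triangular matrix with blocks `A^{s−t}`, the largest eigenvalue of `L Lᵀ` is at
most `1/(1 − r)²`. -/
theorem stmt9 {N T : ℕ}
    (A : Matrix (Fin N) (Fin N) ℝ) (hA : A.IsSymm)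
    (r : ℝ) (hr : ∀ μ ∈ spectrum ℝ A, |μ| ≤ r) (hr1 : r < 1) (hr0 : 0 ≤ r)
    (L : Matrix (Fin (T - 1) × Fin N) (Fin (T - 1) × Fin N) ℝ)
    (hL : ∀ s t : Fin (T - 1), ∀ i j : Fin N,
      L (s, i) (t, j) = if (t : ℕ) ≤ (s : ℕ) then (A ^ ((s : ℕ) - (t : ℕ))) i j else 0) :
    ∀ μ ∈ spectrum ℝ (L * L.transpose), μ ≤ 1 / (1 - r) ^ 2 := by
  intro μ hμ
  have hH : A.IsHermitian := Matrix.isHermitian_iff_isSymm.mpr hA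
  have hAr : ‖A‖ ≤ r := by
    rw [hH.l2_opNorm_eq]
    exact (pi_norm_le_iff_of_nonneg hr0).mpr fun i => hr _ (hH.eigenvalues_mem_spectrum_real i)
  have hLr : ‖L‖ ≤ 1 / (1 - r) := by
    rw [Matrix.eq_sum_shift_kronecker_pow A L hL]
    exact Matrix.l2_opNorm_sum_shift_kronecker_pow_le _ hAr hr1
  calc μ ≤ ‖L * L.transpose‖ :=
        (le_abs_self μ).trans (Matrix.norm_le_l2_opNorm_of_mem_spectrum hμ)
    _ = ‖L‖ * ‖L‖ := by
        rw [← Matrix.conjTranspose_eq_transpose_of_trivial]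
        exact CStarRing.norm_self_mul_star
    _ ≤ 1 / (1 - r) * (1 / (1 - r)) := mul_self_le_mul_self (norm_nonneg L) hLr
    _ = 1 / (1 - r) ^ 2 := by rw [div_mul_div_comm, one_mul, sq]
end
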